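/- Let W be a cyclically reduced nonperiodic word in F(x₁,x₂) with the Magnus ordering, and let W' = AD be the cyclic permutation of W where A is the maximal ascent. Then D = 1 if and only if W is monotonic (all letters of W lie in {x₁,x₂} or all lie in {x₁⁻¹,x₂⁻¹}). -/

import Mathlib

/-- Coefficient of the noncommutative monomial `m` (a word in the variables
`X₁, X₂`, encoded as a `List (Fin 2)`) in the Magnus series of a single letter:
`μ(xᵢ) = 1 + Xᵢ` and `μ(xᵢ⁻¹) = 1 - Xᵢ + Xᵢ² - ⋯`. -/
def lcoeff : (Fin 2 × Bool) → List (Fin 2) → ℤ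
  | (i, true), m => if m = [] then 1 else if m = [i] then 1 else 0
  | (i, false), m => if m.all (fun j => j = i) then (-1) ^ m.length else 0

/-- Coefficient of the monomial `m` in the Magnus series `μ(W)` of a word `W` in
`F(x₁,x₂)` (a letter is a generator in `Fin 2` with a sign), obtained by
convolution of the letter series. -/
def mcoeff : List (Fin 2 × Bool) → List (Fin 2) → ℤ
  | [], m => if m = [] then 1 else 0
  | a :: w, m =>
      ∑ k ∈ Finset.range (m.length + 1), lcoeff a (m.take k) * mcoeff w (m.drop k)

/-- Exponent sum of the generator `i` in the word `w`. -/
def expSum (w : List (Fin 2 × Bool)) (i : Fin 2) : ℤ :=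
  (w.map fun p => if p.1 = i then (if p.2 then (1 : ℤ) else -1) else 0).sum

/-- The ordering on noncommutative monomials used in the Magnus ordering:
`m` comes before `m'` if it has smaller degree, or the same degree and is
lexicographically smaller, where `X₁` precedes `X₂` (i.e. `X₁ ≻ X₂`). -/
def MonBefore (m m' : List (Fin 2)) : Prop :=
  m.length < m'.length ∨ (m.length = m'.length ∧ List.Lex (· < ·) m m')

/-- The Magnus ordering on words of `F(x₁,x₂)`: `v ≺ w` iff at the first monomial
(in the order `MonBefore`) where the Magnus series `μ(v)` and `μ(w)` differ, the
coefficient of `μ(v)` is smaller. -/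
def MagnusLT (v w : List (Fin 2 × Bool)) : Prop :=
  ∃ m, mcoeff v m < mcoeff w m ∧
    ∀ m', MonBefore m' m → mcoeff v m' = mcoeff w m'

/-- `v ⪯ w` in the Magnus ordering. -/
def MagnusLE (v w : List (Fin 2 × Bool)) : Prop :=
  MagnusLT v w ∨ ∀ m, mcoeff v m = mcoeff w m

/-- A word over `X ∪ X⁻¹` is reduced if no letter is immediately followed by its
inverse. -/
def Reduced {X : Type*} (w : List (X × Bool)) : Prop :=
  w.Chain' fun a b => a.1 = b.1 → a.2 = b.2

/-- A word is cyclically reduced if it is reduced and its first letter is not the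
inverse of its last letter. -/
def CyclicallyReduced {X : Type*} (w : List (X × Bool)) : Prop :=
  Reduced w ∧ ∀ a ∈ w.head?, ∀ b ∈ w.getLast?, (a.1 = b.1 → a.2 = b.2)

/-- A word is periodic if it is a concatenation of `k > 1` copies of some word. -/
def Periodic {X : Type*} (w : List (X × Bool)) : Prop :=
  ∃ (U : List (X × Bool)) (k : ℕ), 1 < k ∧ w = (List.replicate k U).flatten

/-- A word is an ascent with respect to the Magnus ordering if it is nonempty and
every nonempty prefix and every nonempty suffix is `≻ 1`. -/
def IsAscentM (w : List (Fin 2 × Bool)) : Prop :=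
  w ≠ [] ∧ (∀ i, 0 < i → i ≤ w.length → MagnusLT [] (w.take i)) ∧
    (∀ i, i < w.length → MagnusLT [] (w.drop i))

/-- `B` occurs as a subword of some cyclic permutation of `W` or of `W⁻¹`. -/
def InRW (W B : List (Fin 2 × Bool)) : Prop :=
  ∃ W', (List.IsRotated W W' ∨ List.IsRotated (FreeGroup.invRev W) W') ∧ B <:+: W'

/-- `A` is the maximal ascent of `W` w.r.t. the Magnus ordering. -/
def IsMaxAscentM (W A : List (Fin 2 × Bool)) : Prop :=
  IsAscentM A ∧ InRW W A ∧ ∀ B, IsAscentM B → InRW W B → MagnusLE B A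

/-- A word is monotonic if all its letters are positive generators, or all are
inverses of generators. -/
def Monotonic (w : List (Fin 2 × Bool)) : Prop :=
  (∀ p ∈ w, p.2 = true) ∨ (∀ p ∈ w, p.2 = false)


namespace MagnusAux


/-- numeric encoding of monomials compatible with deglex -/
def G (c : ℕ) (m : List (Fin 2)) : ℕ := m.foldl (fun n b => 2*n + b.val) c

def F (m : List (Fin 2)) : ℕ := G 1 m

lemma G_cons (c : ℕ) (b : Fin 2) (m : List (Fin 2)) : G c (b :: m) = G (2*c + b.val) m := rfl

lemma G_bounds (m : List (Fin 2)) : ∀ c : ℕ, c * 2^m.length ≤ G c m ∧ G c m < (c+1) * 2^m.length := by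
  induction m with
  | nil => intro c; simp [G]
  | cons b t ih =>
    intro c
    have hb : (b : ℕ) ≤ 1 := Nat.lt_succ_iff.mp b.isLt
    have h1 := (ih (2*c + b.val)).1
    have h2 := (ih (2*c + b.val)).2
    rw [G_cons]
    constructor
    · calc c * 2^(b::t).length = (2*c) * 2^t.length := by
            simp [List.length_cons, pow_succ]; ring
        _ ≤ (2*c + b.val) * 2^t.length := by
            have : (2*c) ≤ 2*c + b.val := Nat.le_add_right _ _
            exact Nat.mul_le_mul_right _ this
        _ ≤ G (2*c + b.val) t := h1
    · calc G (2*c + b.val) t < (2*c + b.val + 1) * 2^t.length := h2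
        _ ≤ ((c+1)*2) * 2^t.length := by
            have : 2*c + b.val + 1 ≤ (c+1)*2 := by omega
            exact Nat.mul_le_mul_right _ this
        _ = (c+1) * 2^(b::t).length := by
            simp [List.length_cons, pow_succ]; ring

lemma G_lt_of_lex : ∀ {m m' : List (Fin 2)}, List.Lex (· < ·) m m' → m.length = m'.length →
    ∀ c, G c m < G c m' := by
  intro m m' h
  induction h with
  | nil => intro hlen; simp at hlen
  | @rel a l b l' hab =>
    intro hlen c
    simp at hlen
    rw [G_cons, G_cons]
    have h1 := (G_bounds l (2*c + a.val)).2
    have h2 := (G_bounds l' (2*c + b.val)).1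
    have hab' : (a:ℕ) < (b:ℕ) := hab
    calc G (2*c+a.val) l < (2*c+a.val+1) * 2^l.length := h1
      _ ≤ (2*c+b.val) * 2^l.length := Nat.mul_le_mul_right _ (by omega)
      _ = (2*c+b.val) * 2^l'.length := by rw [hlen]
      _ ≤ G (2*c+b.val) l' := h2
  | @cons a l l' h ih =>
    intro hlen c
    simp at hlen
    rw [G_cons, G_cons]
    exact ih hlen _

lemma F_lt_of_MonBefore {m m' : List (Fin 2)} (h : MonBefore m m') : F m < F m' := by
  rcases h with h | ⟨hlen, hlex⟩
  · have h1 := (G_bounds m 1).2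
    have h2 := (G_bounds m' 1).1
    calc F m < (1+1) * 2^m.length := h1
      _ = 2^(m.length + 1) := by rw [pow_succ]; ring
      _ ≤ 2^m'.length := Nat.pow_le_pow_right (by norm_num) h
      _ ≤ F m' := by simpa [F] using h2
  · exact G_lt_of_lex hlex hlen 1

lemma lex_trichotomy : ∀ (l₁ l₂ : List (Fin 2)),
    List.Lex (· < ·) l₁ l₂ ∨ l₁ = l₂ ∨ List.Lex (· < ·) l₂ l₁ := by
  intro l₁
  induction l₁ with
  | nil => intro l₂; cases l₂ with
    | nil => exact Or.inr (Or.inl rfl)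
    | cons b t => exact Or.inl List.Lex.nil
  | cons a t ih =>
    intro l₂
    cases l₂ with
    | nil => exact Or.inr (Or.inr List.Lex.nil)
    | cons b t' =>
      rcases lt_trichotomy a b with h | h | h
      · exact Or.inl (List.Lex.rel h)
      · subst h
        rcases ih t' with h | h | h
        · exact Or.inl (List.Lex.cons h)
        · exact Or.inr (Or.inl (by rw [h]))
        · exact Or.inr (Or.inr (List.Lex.cons h))
      · exact Or.inr (Or.inr (List.Lex.rel h))

lemma MonBefore_total {m m' : List (Fin 2)} (h : m ≠ m') : MonBefore m m' ∨ MonBefore m' m := by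
  rcases Nat.lt_trichotomy m.length m'.length with hl | hl | hl
  · exact Or.inl (Or.inl hl)
  · rcases lex_trichotomy m m' with hx | hx | hx
    · exact Or.inl (Or.inr ⟨hl, hx⟩)
    · exact absurd hx h
    · exact Or.inr (Or.inr ⟨hl.symm, hx⟩)
  · exact Or.inr (Or.inl hl)

lemma MonBefore_of_F_lt {m m' : List (Fin 2)} (h : F m < F m') : MonBefore m m' := by
  rcases eq_or_ne m m' with rfl | hne
  · omega
  · rcases MonBefore_total hne with h' | h'
    · exact h'
    · exact absurd (F_lt_of_MonBefore h') (by omega)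

lemma MonBefore_trans {a b c : List (Fin 2)} (h1 : MonBefore a b) (h2 : MonBefore b c) :
    MonBefore a c :=
  MonBefore_of_F_lt (lt_trans (F_lt_of_MonBefore h1) (F_lt_of_MonBefore h2))

lemma MonBefore_irrefl (m : List (Fin 2)) : ¬ MonBefore m m := fun h =>
  absurd (F_lt_of_MonBefore h) (lt_irrefl _)

lemma MonBefore_take {m : List (Fin 2)} {k : ℕ} (hk : k < m.length) : MonBefore (m.take k) m :=
  Or.inl (by rw [List.length_take]; omega)


lemma lcoeff_nil (a : Fin 2 × Bool) : lcoeff a [] = 1 := by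
  obtain ⟨i, b⟩ := a; cases b <;> simp [lcoeff]

lemma mcoeff_nil_mon (w : List (Fin 2 × Bool)) : mcoeff w [] = 1 := by
  induction w with
  | nil => simp [mcoeff]
  | cons a w ih => simp [mcoeff, lcoeff_nil, ih]

lemma mcoeff_one (m : List (Fin 2)) : mcoeff [] m = if m = [] then 1 else 0 := rfl

/-- triangle sum swap -/
lemma sum_triangle (N : ℕ) (f : ℕ → ℕ → ℤ) :
    ∑ j ∈ Finset.range (N+1), ∑ k ∈ Finset.range (j+1), f k j
      = ∑ k ∈ Finset.range (N+1), ∑ l ∈ Finset.range (N-k+1), f k (k+l) := by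
  have h1 : ∀ j ∈ Finset.range (N+1), ∑ k ∈ Finset.range (j+1), f k j
      = ∑ k ∈ Finset.range (N+1), if k ≤ j then f k j else 0 := by
    intro j hj
    simp only [Finset.mem_range] at hj
    have : Finset.range (j+1) = Finset.filter (fun k => k ≤ j) (Finset.range (N+1)) := by
      ext x; simp [Finset.mem_filter, Finset.mem_range]; omega
    rw [this, Finset.sum_filter]
  rw [Finset.sum_congr rfl h1, Finset.sum_comm]
  apply Finset.sum_congr rfl
  intro k hk
  simp only [Finset.mem_range] at hk
  have h2 : Finset.Ico k (N+1) = Finset.filter (fun j => k ≤ j) (Finset.range (N+1)) := by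
    ext x; simp [Finset.mem_filter, Finset.mem_range, Finset.mem_Ico]; omega
  rw [← Finset.sum_filter, ← h2, Finset.sum_Ico_eq_sum_range]
  have : N + 1 - k = N - k + 1 := by omega
  rw [this]

lemma mcoeff_append (u v : List (Fin 2 × Bool)) (m : List (Fin 2)) :
    mcoeff (u ++ v) m
      = ∑ k ∈ Finset.range (m.length + 1), mcoeff u (m.take k) * mcoeff v (m.drop k) := by
  induction u generalizing m with
  | nil =>
    simp only [List.nil_append]
    rcases eq_or_ne m [] with rfl | hm
    · simp [mcoeff]
    · rw [Finset.sum_eq_single 0]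
      · simp [mcoeff_one]
      · intro k hk hk0
        have : m.take k ≠ [] := by
          intro h
          rcases List.take_eq_nil_iff.mp h with h' | h'
          · exact hk0 h'
          · exact hm h'
        simp [mcoeff_one, this]
      · intro h
        simp at h
  | cons a u ih =>
    show (∑ k ∈ Finset.range (m.length + 1), lcoeff a (m.take k) * mcoeff (u ++ v) (m.drop k)) = _
    have step1 : ∀ k ∈ Finset.range (m.length + 1),
        lcoeff a (m.take k) * mcoeff (u ++ v) (m.drop k)
          = ∑ l ∈ Finset.range (m.length - k + 1),
              lcoeff a (m.take k) * (mcoeff u ((m.take (k+l)).drop k) * mcoeff v (m.drop (k+l))) := by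
      intro k hk
      simp only [Finset.mem_range] at hk
      rw [ih (m.drop k), Finset.mul_sum]
      have hlen : (m.drop k).length = m.length - k := List.length_drop
      rw [hlen]
      apply Finset.sum_congr rfl
      intro l _
      have e1 : (m.drop k).take l = (m.take (k+l)).drop k := by
        rw [List.drop_take, Nat.add_sub_cancel_left]
      have e2 : (m.drop k).drop l = m.drop (k+l) := by rw [List.drop_drop]
      rw [e1, e2]
    rw [Finset.sum_congr rfl step1, ← sum_triangle m.length
      (fun k j => lcoeff a (m.take k) * (mcoeff u ((m.take j).drop k) * mcoeff v (m.drop j)))]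
    apply Finset.sum_congr rfl
    intro j hj
    simp only [Finset.mem_range] at hj
    show _ = mcoeff (a :: u) (m.take j) * mcoeff v (m.drop j)
    have hjl : (m.take j).length = j := by rw [List.length_take]; omega
    show _ = (∑ k ∈ Finset.range ((m.take j).length + 1),
        lcoeff a ((m.take j).take k) * mcoeff u ((m.take j).drop k)) * mcoeff v (m.drop j)
    rw [hjl, Finset.sum_mul]
    apply Finset.sum_congr rfl
    intro k hk
    simp only [Finset.mem_range] at hk
    rw [List.take_take]
    have : min k j = k := by omega
    rw [this, mul_assoc]

end MagnusAux

namespace MagnusAux2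
open MagnusAux

lemma expSum_append (u v : List (Fin 2 × Bool)) (i : Fin 2) :
    expSum (u ++ v) i = expSum u i + expSum v i := by
  simp [expSum]

lemma expSum_cons (a : Fin 2 × Bool) (w : List (Fin 2 × Bool)) (i : Fin 2) :
    expSum (a :: w) i
      = (if a.1 = i then (if a.2 then (1:ℤ) else -1) else 0) + expSum w i := by
  simp [expSum]

lemma lcoeff_single (a : Fin 2 × Bool) (i : Fin 2) :
    lcoeff a [i] = if a.1 = i then (if a.2 then (1:ℤ) else -1) else 0 := by
  obtain ⟨j, b⟩ := a
  cases b <;> simp [lcoeff] <;> rcases eq_or_ne j i with rfl | hne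
  · simp
  · simp [hne, (by simpa [eq_comm] using hne : ¬ i = j)]
  · simp
  · simp [hne, (by simpa [eq_comm] using hne : ¬ i = j)]

lemma mcoeff_single (w : List (Fin 2 × Bool)) (i : Fin 2) :
    mcoeff w [i] = expSum w i := by
  induction w with
  | nil => simp [mcoeff_one, expSum]
  | cons a w ih =>
    show (∑ k ∈ Finset.range 2, lcoeff a ([i].take k) * mcoeff w ([i].drop k)) = _
    rw [Finset.sum_range_succ, Finset.sum_range_one]
    simp only [List.take_zero, List.drop_zero, List.take_succ_cons, List.take_zero,
      List.drop_succ_cons, List.drop_zero]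
    rw [lcoeff_nil, mcoeff_nil_mon, ih, expSum_cons, lcoeff_single]
    ring

lemma before_single_zero {m' : List (Fin 2)} (hm' : MonBefore m' [0]) : m' = [] := by
  rcases hm' with hl | ⟨hl, hlex⟩
  · simp only [List.length_singleton] at hl
    exact List.length_eq_zero_iff.mp (by omega)
  · simp only [List.length_singleton] at hl
    rcases m' with _ | ⟨a, t⟩
    · rfl
    · simp at hl
      subst hl
      cases hlex with
      | rel h => exact absurd h (by intro hh; exact absurd hh (Fin.not_lt_zero a))
      | cons h => cases h
  
lemma before_single_one {m' : List (Fin 2)} (hm' : MonBefore m' [1]) :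
    m' = [] ∨ m' = [0] := by
  rcases hm' with hl | ⟨hl, hlex⟩
  · simp only [List.length_singleton] at hl
    exact Or.inl (List.length_eq_zero_iff.mp (by omega))
  · simp only [List.length_singleton] at hl
    rcases m' with _ | ⟨a, t⟩
    · exact Or.inl rfl
    · simp at hl
      subst hl
      cases hlex with
      | rel h =>
        refine Or.inr ?_
        have : a = 0 := by
          have := Fin.lt_iff_val_lt_val.mp h
          simp at this
          exact Fin.ext (by simpa using this)
        rw [this]
      | cons h => cases h

lemma mcoeff_one_single (i : Fin 2) : mcoeff [] [i] = 0 := by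
  rw [mcoeff_one]; simp

/-- a word is positive at degree one implies `1 ≺ w` -/
lemma magnusLT_of_expSum {v : List (Fin 2 × Bool)}
    (h : 0 < expSum v 0 ∨ (expSum v 0 = 0 ∧ 0 < expSum v 1)) : MagnusLT [] v := by
  rcases h with h | ⟨h0, h1⟩
  · refine ⟨[0], ?_, ?_⟩
    · rw [mcoeff_one_single, mcoeff_single]
      exact h
    · intro m' hm'
      rw [before_single_zero hm', mcoeff_nil_mon, mcoeff_nil_mon]

  · refine ⟨[1], ?_, ?_⟩
    · rw [mcoeff_one_single, mcoeff_single]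
      exact h1
    · intro m' hm'
      rcases before_single_one hm' with rfl | rfl
      · rw [mcoeff_nil_mon, mcoeff_nil_mon]
      · rw [mcoeff_one_single, mcoeff_single, h0]

lemma expSum_le_of_not_lt {v : List (Fin 2 × Bool)} (h : ¬ MagnusLT [] v) :
    expSum v 0 < 0 ∨ (expSum v 0 = 0 ∧ expSum v 1 ≤ 0) := by
  by_contra hc
  push_neg at hc
  apply h
  apply magnusLT_of_expSum
  rcases lt_trichotomy (expSum v 0) 0 with h0 | h0 | h0
  · exact absurd h0 (not_lt.mpr (le_of_lt (by omega)))
  · exact Or.inr ⟨h0, by have := hc.2 h0; omega⟩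
  · exact Or.inl h0

lemma F_inj {a b : List (Fin 2)} (h : F a = F b) : a = b := by
  by_contra hne
  rcases MonBefore_total hne with h' | h' <;>
    exact absurd (F_lt_of_MonBefore h') (by omega)

lemma witness_ne_nil {u : List (Fin 2 × Bool)} {m : List (Fin 2)}
    (h : mcoeff [] m < mcoeff u m) : m ≠ [] := by
  rintro rfl
  rw [mcoeff_nil_mon, mcoeff_nil_mon] at h
  exact lt_irrefl _ h

lemma mcoeff_eq_zero_of_before {u : List (Fin 2 × Bool)} {mu m' : List (Fin 2)}
    (hu : ∀ m'', MonBefore m'' mu → mcoeff [] m'' = mcoeff u m'')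
    (h : MonBefore m' mu) (hne : m' ≠ []) : mcoeff u m' = 0 := by
  have := hu m' h
  rw [mcoeff_one] at this
  simp only [hne, if_false] at this
  exact this.symm

/-- product of two `≻ 1` words is `≻ 1` -/
lemma pos_mul {u v : List (Fin 2 × Bool)} (hu : MagnusLT [] u) (hv : MagnusLT [] v) :
    MagnusLT [] (u ++ v) := by
  obtain ⟨mu, hu1, hu2⟩ := hu
  obtain ⟨mv, hv1, hv2⟩ := hv
  have hmu : mu ≠ [] := witness_ne_nil hu1
  have hmv : mv ≠ [] := witness_ne_nil hv1
  have hu1' : 0 < mcoeff u mu := by rw [mcoeff_one] at hu1; simpa [hmu] using hu1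
  have hv1' : 0 < mcoeff v mv := by rw [mcoeff_one] at hv1; simpa [hmv] using hv1
  set m : List (Fin 2) := if F mu ≤ F mv then mu else mv with hm
  have hmne : m ≠ [] := by rw [hm]; split <;> assumption
  have hFmu : F m ≤ F mu := by rw [hm]; split <;> omega
  have hFmv : F m ≤ F mv := by rw [hm]; split <;> omega
  have below : ∀ m', MonBefore m' m → mcoeff [] m' = mcoeff (u ++ v) m' := by
    intro m' hm'
    rcases eq_or_ne m' [] with rfl | hne
    · rw [mcoeff_nil_mon, mcoeff_nil_mon]
    · rw [mcoeff_one]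
      simp only [hne, if_false]
      rw [mcoeff_append]
      symm
      apply Finset.sum_eq_zero
      intro k hk
      simp only [Finset.mem_range] at hk
      rcases Nat.lt_or_ge k m'.length with hkl | hkl
      · rcases Nat.eq_zero_or_pos k with rfl | hk0
        · have hzero : mcoeff v m' = 0 :=
            mcoeff_eq_zero_of_before hv2
              (MonBefore_of_F_lt (lt_of_lt_of_le (F_lt_of_MonBefore hm') hFmv)) hne
          simp [hzero]
        · have ht : MonBefore (m'.take k) m' := MonBefore_take hkl
          have htu : MonBefore (m'.take k) mu :=
            MonBefore_of_F_lt (lt_of_lt_of_le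
              (lt_trans (F_lt_of_MonBefore ht) (F_lt_of_MonBefore hm')) hFmu)
          have hne2 : m'.take k ≠ [] := by
            intro h
            rcases List.take_eq_nil_iff.mp h with h' | h'
            · omega
            · exact hne h'
          rw [mcoeff_eq_zero_of_before hu2 htu hne2, zero_mul]
      · have hk' : k = m'.length := by omega
        subst hk'
        rw [List.take_length, List.drop_length]
        have hzero : mcoeff u m' = 0 :=
          mcoeff_eq_zero_of_before hu2
            (MonBefore_of_F_lt (lt_of_lt_of_le (F_lt_of_MonBefore hm') hFmu)) hne
        rw [hzero, zero_mul]
  refine ⟨m, ?_, fun m' h => below m' h⟩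
  rw [mcoeff_one]
  simp only [hmne, if_false]
  rw [mcoeff_append]
  have hN : 1 ≤ m.length := by
    rcases m with _ | _
    · exact absurd rfl hmne
    · simp
  have hsum : ∑ k ∈ Finset.range (m.length + 1), mcoeff u (m.take k) * mcoeff v (m.drop k)
      = mcoeff v m + mcoeff u m := by
    rw [Finset.sum_range_succ, List.take_length, List.drop_length, mcoeff_nil_mon, mul_one]
    congr 1
    rw [Finset.sum_eq_single 0]
    · simp [mcoeff_nil_mon]
    · intro k hk hk0
      simp only [Finset.mem_range] at hk
      have hk0' : 0 < k := Nat.pos_of_ne_zero hk0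
      have ht : MonBefore (m.take k) m := MonBefore_take hk
      have htu : MonBefore (m.take k) mu :=
        MonBefore_of_F_lt (lt_of_lt_of_le (F_lt_of_MonBefore ht) hFmu)
      have hne2 : m.take k ≠ [] := by
        intro h
        rcases List.take_eq_nil_iff.mp h with h' | h'
        · omega
        · exact hmne h'
      rw [mcoeff_eq_zero_of_before hu2 htu hne2, zero_mul]
    · intro h
      exact absurd (Finset.mem_range.mpr hN) h
  rw [hsum]
  rcases eq_or_ne mu mv with rfl | hnemuv
  · have : m = mu := by rw [hm]; simp
    rw [this]
    omega
  · rw [hm]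
    split
    · rename_i hle
      have hlt : F mu < F mv := lt_of_le_of_ne hle (fun h => hnemuv (F_inj h))
      have : mcoeff v mu = 0 :=
        mcoeff_eq_zero_of_before hv2 (MonBefore_of_F_lt hlt) hmu
      omega
    · rename_i hle
      have hlt : F mv < F mu := by omega
      have : mcoeff u mv = 0 :=
        mcoeff_eq_zero_of_before hu2 (MonBefore_of_F_lt hlt) hmv
      omega

lemma mcoeff_singleton (a : Fin 2 × Bool) (m : List (Fin 2)) :
    mcoeff [a] m = lcoeff a m := by
  rcases eq_or_ne m [] with rfl | hne
  · rw [mcoeff_nil_mon, lcoeff_nil]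
  · show (∑ k ∈ Finset.range (m.length + 1), lcoeff a (m.take k) * mcoeff [] (m.drop k)) = _
    rw [Finset.sum_eq_single m.length]
    · rw [List.take_length, List.drop_length, mcoeff_nil_mon, mul_one]
    · intro k hk hk0
      simp only [Finset.mem_range] at hk
      have : m.drop k ≠ [] := by
        intro h
        rw [List.drop_eq_nil_iff] at h
        omega
      rw [mcoeff_one]
      simp [this]
    · intro h
      simp at h

/-- a single inverse generator is not `≻ 1` -/
lemma not_lt_neg_letter (i : Fin 2) : ¬ MagnusLT [] [(i, false)] := by
  rintro ⟨m, h1, h2⟩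
  have hne : m ≠ [] := witness_ne_nil h1
  rw [mcoeff_one, mcoeff_singleton] at h1
  simp only [hne, if_false] at h1
  have hall : (m.all fun j => j = i) ∧ (0:ℤ) < (-1)^m.length := by
    by_cases hc : (m.all fun j => j = i)
    · refine ⟨hc, ?_⟩
      simpa [lcoeff, hc] using h1
    · exfalso
      simp [lcoeff, hc] at h1
  have heven : Even m.length := by
    rcases Nat.even_or_odd m.length with h | h
    · exact h
    · exfalso
      rw [h.neg_one_pow] at hall
      omega
  have hlen2 : 2 ≤ m.length := by
    have : m.length ≠ 0 := fun h => hne (List.length_eq_zero_iff.mp h)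
    rcases heven with ⟨k, hk⟩
    omega
  have hb : MonBefore [i] m := Or.inl (by simp; omega)
  have := h2 [i] hb
  rw [mcoeff_one_single, mcoeff_singleton, lcoeff_single] at this
  simp at this

lemma magnusLT_asymm {a b : List (Fin 2 × Bool)} (h1 : MagnusLT a b) (h2 : MagnusLT b a) :
    False := by
  obtain ⟨m1, h1a, h1b⟩ := h1
  obtain ⟨m2, h2a, h2b⟩ := h2
  rcases eq_or_ne m1 m2 with rfl | hne
  · omega
  · rcases MonBefore_total hne with h | h
    · have := h2b m1 h
      omega
    · have := h1b m2 h
      omega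

lemma fin2_cases (i : Fin 2) : i = 0 ∨ i = 1 := by omega

/-- positive letters give positive expSum facts -/
lemma expSum_nonneg_pos {w : List (Fin 2 × Bool)} (h : ∀ a ∈ w, a.2 = true) (i : Fin 2) :
    0 ≤ expSum w i := by
  induction w with
  | nil => simp [expSum]
  | cons a w ih =>
    rw [expSum_cons]
    have ha := h a (by simp)
    have ihw := ih (fun x hx => h x (by simp [hx]))
    rw [ha]
    simp only [if_true]
    split <;> omega

lemma expSum_pos_of_mem {w : List (Fin 2 × Bool)} {i : Fin 2} (hmem : (i, true) ∈ w)
    (h : ∀ a ∈ w, a.2 = true) : 0 < expSum w i := by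
  induction w with
  | nil => simp at hmem
  | cons a w ih =>
    have hw : ∀ x ∈ w, x.2 = true := fun x hx => h x (List.mem_cons_of_mem _ hx)
    rw [expSum_cons]
    have ihn := expSum_nonneg_pos hw i
    rcases List.mem_cons.mp hmem with rfl | hmem'
    · have hone : (if ((i,true).1 = i) then (if (i,true).2 then (1:ℤ) else -1) else 0) = 1 := by
        simp
      rw [hone]
      omega
    · have hpos := ih hmem' hw
      have ha := h a (by simp)
      rw [ha]
      simp only [if_true]
      split <;> omega

/-- a nonempty positive word is `≻ 1` -/
lemma pos_word_lt : ∀ (w : List (Fin 2 × Bool)), w ≠ [] → (∀ a ∈ w, a.2 = true) →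
    MagnusLT [] w := by
  intro w hne h
  apply magnusLT_of_expSum
  rcases w with _ | ⟨a, w'⟩
  · exact absurd rfl hne
  · have ha := h a (by simp)
    obtain ⟨i, b⟩ := a
    simp at ha
    subst ha
    rcases fin2_cases i with rfl | rfl
    · left
      exact expSum_pos_of_mem (by simp) h
    · have h0 : 0 ≤ expSum ((1,true) :: w') 0 := expSum_nonneg_pos h 0
      rcases lt_or_eq_of_le h0 with h0' | h0'
      · exact Or.inl h0'
      · exact Or.inr ⟨h0'.symm, expSum_pos_of_mem (by simp) h⟩

lemma lcoeff_pos_nonneg (i : Fin 2) (m : List (Fin 2)) : 0 ≤ lcoeff (i, true) m := by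
  simp only [lcoeff]
  split
  · norm_num
  · split <;> norm_num

lemma mcoeff_nonneg_of_pos : ∀ (w : List (Fin 2 × Bool)), (∀ a ∈ w, a.2 = true) →
    ∀ m, 0 ≤ mcoeff w m := by
  intro w
  induction w with
  | nil =>
    intro _ m
    rw [mcoeff_one]
    split <;> norm_num
  | cons a w ih =>
    intro h m
    show 0 ≤ ∑ k ∈ Finset.range (m.length + 1), lcoeff a (m.take k) * mcoeff w (m.drop k)
    apply Finset.sum_nonneg
    intro k _
    have ha := h a (by simp)
    obtain ⟨i, b⟩ := a
    simp at ha
    subst ha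
    exact mul_nonneg (lcoeff_pos_nonneg i _) (ih (fun x hx => h x (by simp [hx])) _)

lemma mcoeff_le_append {A D : List (Fin 2 × Bool)} (hA : ∀ a ∈ A, a.2 = true)
    (hD : ∀ a ∈ D, a.2 = true) (m : List (Fin 2)) : mcoeff A m ≤ mcoeff (A ++ D) m := by
  rw [mcoeff_append]
  have hterm : mcoeff A (m.take m.length) * mcoeff D (m.drop m.length) = mcoeff A m := by
    rw [List.take_length, List.drop_length, mcoeff_nil_mon, mul_one]
  calc mcoeff A m = mcoeff A (m.take m.length) * mcoeff D (m.drop m.length) := hterm.symm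
    _ ≤ _ := by
        apply Finset.single_le_sum (f := fun k => mcoeff A (m.take k) * mcoeff D (m.drop k))
        · intro k _
          exact mul_nonneg (mcoeff_nonneg_of_pos A hA _) (mcoeff_nonneg_of_pos D hD _)
        · simp


end MagnusAux2

namespace MagnusAux3
open MagnusAux MagnusAux2

/-- lex-order at degree 1 -/
def eLE (u v : List (Fin 2 × Bool)) : Prop :=
  expSum u 0 < expSum v 0 ∨ (expSum u 0 = expSum v 0 ∧ expSum u 1 ≤ expSum v 1)

lemma eLE_refl (u : List (Fin 2 × Bool)) : eLE u u := Or.inr ⟨rfl, le_rfl⟩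

lemma eLE_trans {u v w : List (Fin 2 × Bool)} (h1 : eLE u v) (h2 : eLE v w) : eLE u w := by
  unfold eLE at *
  rcases h1 with h1 | ⟨h1a, h1b⟩ <;> rcases h2 with h2 | ⟨h2a, h2b⟩ <;>
    first
      | exact Or.inl (by omega)
      | exact Or.inr ⟨by omega, by omega⟩

/-- The chain lemma: from any starting position we can move right to a position
whose suffix has all prefixes `≻ 1`, without increasing the degree-1 prefix value. -/
lemma chain {A : List (Fin 2 × Bool)} (hA : IsAscentM A) :
    ∀ (d j : ℕ), A.length - j ≤ d → j < A.length →
      ∃ j', j ≤ j' ∧ j' < A.length ∧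
        (∀ t, 0 < t → t ≤ A.length - j' → MagnusLT [] ((A.drop j').take t)) ∧
        eLE (A.take j') (A.take j) := by
  intro d
  induction d with
  | zero => intro j hd hj; omega
  | succ d ih =>
    intro j hd hj
    by_cases hgood : ∀ t, 0 < t → t ≤ A.length - j → MagnusLT [] ((A.drop j).take t)
    · exact ⟨j, le_rfl, hj, hgood, eLE_refl _⟩
    · push_neg at hgood
      obtain ⟨t, ht0, htlen, hbad⟩ := hgood
      have hkne : j + t ≠ A.length := by
        intro h
        have heq : (A.drop j).take t = A.drop j := by
          apply List.take_of_length_le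
          rw [List.length_drop]
          omega
        rw [heq] at hbad
        exact hbad (hA.2.2 j hj)
      have hk : j + t < A.length := by omega
      have hsplit : A.take (j + t) = A.take j ++ (A.drop j).take t := List.take_add ..
      have hEb := expSum_le_of_not_lt hbad
      have hstep : eLE (A.take (j + t)) (A.take j) := by
        unfold eLE
        rw [hsplit, expSum_append, expSum_append]
        rcases hEb with h | ⟨h1, h2⟩
        · exact Or.inl (by omega)
        · exact Or.inr ⟨by omega, by omega⟩
      obtain ⟨j', h1, h2, h3, h4⟩ := ih (j + t) (by omega) hk
      exact ⟨j', by omega, h2, h3, eLE_trans h4 hstep⟩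

lemma exists_first_neg : ∀ (A : List (Fin 2 × Bool)), (∃ a ∈ A, a.2 = false) →
    ∃ (P : List (Fin 2 × Bool)) (g : Fin 2) (Rst : List (Fin 2 × Bool)),
      A = P ++ (g, false) :: Rst ∧ ∀ a ∈ P, a.2 = true := by
  intro A
  induction A with
  | nil => rintro ⟨a, ha, _⟩; simp at ha
  | cons a A ih =>
    intro h
    by_cases ha : a.2 = false
    · exact ⟨[], a.1, A, by simp [← ha], by simp⟩
    · have ha' : a.2 = true := by
        cases h2 : a.2
        · exact absurd h2 ha
        · rfl
      have hA : ∃ x ∈ A, x.2 = false := by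
        obtain ⟨x, hx, hx2⟩ := h
        rcases List.mem_cons.mp hx with rfl | hx'
        · exact absurd hx2 ha
        · exact ⟨x, hx', hx2⟩
      obtain ⟨P, g, Rst, hPR, hP⟩ := ih hA
      refine ⟨a :: P, g, Rst, by simp [hPR], ?_⟩
      intro x hx
      rcases List.mem_cons.mp hx with rfl | hx'
      · exact ha'
      · exact hP x hx'

/-- the heart of the forward direction: the maximal ascent, if it is a full
cyclic word, has no negative letter -/
lemma no_neg_of_max {W A : List (Fin 2 × Bool)} (hrot : List.IsRotated W A)
    (hmax : IsMaxAscentM W A) : ∀ a ∈ A, a.2 = true := by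
  by_contra hcon
  push_neg at hcon
  obtain ⟨x, hxA, hx2⟩ := hcon
  have hx2' : x.2 = false := by
    cases h2 : x.2
    · rfl
    · exact absurd h2 hx2
  have hAsc : IsAscentM A := hmax.1
  obtain ⟨P, g, Rst, hdecomp, hPpos⟩ := exists_first_neg A ⟨x, hxA, hx2'⟩
  set p := P.length with hp
  have htakep : A.take p = P := by rw [hdecomp]; exact List.take_left
  have hdropp : A.drop p = (g, false) :: Rst := by rw [hdecomp]; exact List.drop_left
  have hlenA : A.length = p + 1 + Rst.length := by rw [hdecomp]; simp; omega
  -- P is nonempty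
  have hPne : P ≠ [] := by
    rintro rfl
    have h1 : MagnusLT [] (A.take 1) := hAsc.2.1 1 one_pos (by omega)
    have : A.take 1 = [(g, false)] := by
      rw [hdecomp]; simp
    rw [this] at h1
    exact not_lt_neg_letter g h1
  have hp1 : 1 ≤ p := by
    rcases P with _ | _
    · exact absurd rfl hPne
    · simp [hp]
  -- Rst is nonempty
  have hRne : Rst ≠ [] := by
    rintro rfl
    have hplen : p < A.length := by omega
    have h1 : MagnusLT [] (A.drop p) := hAsc.2.2 p hplen
    rw [hdropp] at h1
    exact not_lt_neg_letter g h1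
  have hRlen : 1 ≤ Rst.length := by
    rcases Rst with _ | _
    · exact absurd rfl hRne
    · simp
  -- run the chain from p+1
  obtain ⟨j', hj'1, hj'2, hgood, hE⟩ := chain hAsc A.length (p+1) (by omega) (by omega)
  -- φ(p+1) vs φ(p)
  have htakep1 : A.take (p+1) = P ++ [(g, false)] := by
    rw [List.take_add, htakep, hdropp]
    simp
  -- strict degree-1 drop from p to j'
  have hstrict : expSum (A.take j') 0 < expSum (A.take p) 0 ∨
      (expSum (A.take j') 0 = expSum (A.take p) 0 ∧
        expSum (A.take j') 1 < expSum (A.take p) 1) := by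
    have h1 := hE
    unfold eLE at h1
    rw [htakep1, expSum_append, expSum_append] at h1
    rw [htakep]
    have e0 : expSum [(g, false)] 0 = if g = 0 then -1 else 0 := by
      rcases fin2_cases g with rfl | rfl <;> simp [expSum]
    have e1 : expSum [(g, false)] 1 = if g = 1 then -1 else 0 := by
      rcases fin2_cases g with rfl | rfl <;> simp [expSum]
    rcases fin2_cases g with rfl | rfl
    · simp at e0 e1
      rw [e0, e1] at h1
      rcases h1 with h | ⟨ha, hb⟩
      · left; omega
      · left; omega
    · simp at e0 e1
      rw [e0, e1] at h1
      rcases h1 with h | ⟨ha, hb⟩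
      · left; omega
      · right; exact ⟨by omega, by omega⟩
  -- define B
  have hSlen : (A.drop j').length = A.length - j' := List.length_drop
  have hSne : A.drop j' ≠ [] := by
    apply List.ne_nil_of_length_pos
    omega
  have hSlt : MagnusLT [] (A.drop j') := hAsc.2.2 j' hj'2
  have hPplen : (A.take p).length = p := by
    rw [List.length_take]
    omega
  have hPppos : ∀ a ∈ A.take p, a.2 = true := by
    rw [htakep]; exact hPpos
  have hPpne : A.take p ≠ [] := by
    apply List.ne_nil_of_length_pos
    omega
  have hPplt : MagnusLT [] (A.take p) := pos_word_lt _ hPpne hPppos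
  have hBlen : (A.drop j' ++ A.take p).length = (A.drop j').length + (A.take p).length :=
    List.length_append
  -- B is an ascent
  have hBasc : IsAscentM (A.drop j' ++ A.take p) := by
    refine ⟨by simp [hSne], ?_, ?_⟩
    · intro t ht0 htle
      rw [List.take_append]
      rcases le_or_gt t (A.drop j').length with hts | hts
      · have h0 : t - (A.drop j').length = 0 := by omega
        rw [h0, List.take_zero, List.append_nil]
        exact hgood t ht0 (by omega)
      · have hSall : (A.drop j').take t = A.drop j' := List.take_of_length_le (le_of_lt hts)
        rw [hSall]
        apply pos_mul hSlt
        apply pos_word_lt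
        · apply List.ne_nil_of_length_pos
          rw [List.length_take]
          rw [hBlen] at htle
          omega
        · intro a ha
          exact hPppos a (List.take_subset _ _ ha)
    · intro t htlt
      rw [List.drop_append]
      rcases Nat.lt_or_ge t (A.drop j').length with hts | hts
      · have h0 : t - (A.drop j').length = 0 := by omega
        rw [h0, List.drop_zero]
        apply pos_mul _ hPplt
        have hdd : (A.drop j').drop t = A.drop (j' + t) := by rw [List.drop_drop]
        rw [hdd]
        exact hAsc.2.2 (j' + t) (by omega)
      · have h0 : (A.drop j').drop t = [] := by
          rw [List.drop_eq_nil_iff]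
          omega
        rw [h0, List.nil_append]
        apply pos_word_lt
        · apply List.ne_nil_of_length_pos
          rw [List.length_drop]
          rw [hBlen] at htlt
          omega
        · intro a ha
          exact hPppos a (List.drop_subset _ _ ha)
  -- B is in RW
  have hBin : InRW W (A.drop j' ++ A.take p) := by
    refine ⟨A.drop p ++ A.take p, Or.inl ?_, ?_⟩
    · have h1 : A ~r (A.drop p ++ A.take p) := by
        conv_lhs => rw [← List.take_append_drop p A]
        exact List.isRotated_append
      exact hrot.trans h1
    · refine ⟨(A.drop p).take (j' - p), [], ?_⟩
      have hdd : (A.drop p).drop (j' - p) = A.drop j' := by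
        rw [List.drop_drop]
        congr 1
        omega
      calc (A.drop p).take (j' - p) ++ (A.drop j' ++ A.take p) ++ []
          = (A.drop p).take (j' - p) ++ ((A.drop p).drop (j' - p) ++ A.take p) := by
            rw [List.append_nil, hdd]
        _ = ((A.drop p).take (j' - p) ++ (A.drop p).drop (j' - p)) ++ A.take p := by
            rw [List.append_assoc]
        _ = A.drop p ++ A.take p := by rw [List.take_append_drop]
  -- A ≺ B at degree 1
  have hexp : ∀ i : Fin 2, expSum (A.drop j' ++ A.take p) i
      = expSum (A.drop j') i + expSum (A.take p) i := by
    intro i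
    rw [expSum_append]
  have hexpA : ∀ i : Fin 2, expSum A i = expSum (A.take j') i + expSum (A.drop j') i := by
    intro i
    conv_lhs => rw [← List.take_append_drop j' A]
    rw [expSum_append]
  have hAB : MagnusLT A (A.drop j' ++ A.take p) := by
    rcases hstrict with h | ⟨h0, h1⟩
    · refine ⟨[0], ?_, ?_⟩
      · rw [mcoeff_single, mcoeff_single]
        have := hexp 0
        have := hexpA 0
        omega
      · intro m' hm'
        rw [before_single_zero hm', mcoeff_nil_mon, mcoeff_nil_mon]
    · refine ⟨[1], ?_, ?_⟩
      · rw [mcoeff_single, mcoeff_single]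
        have := hexp 1
        have := hexpA 1
        omega
      · intro m' hm'
        rcases before_single_one hm' with rfl | rfl
        · rw [mcoeff_nil_mon, mcoeff_nil_mon]
        · rw [mcoeff_single, mcoeff_single]
          have := hexp 0
          have := hexpA 0
          omega
  -- contradiction with maximality
  rcases hmax.2.2 _ hBasc hBin with hlt | heq
  · exact magnusLT_asymm hAB hlt
  · obtain ⟨m0, hm0, _⟩ := hAB
    have := heq m0
    omega


end MagnusAux3

/-- Let `W` be cyclically reduced, nonperiodic, of length `> 1` in `F(x₁,x₂)` with
the Magnus ordering, and let `W' = AD` be a cyclic permutation of `W` where `A` is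
the maximal ascent. Then `D = 1` iff `W` is monotonic. -/
theorem complement_trivial_iff_monotonic (W W' A D : List (Fin 2 × Bool))
    (hcr : CyclicallyReduced W) (hnp : ¬ Periodic W) (hlen : 1 < W.length)
    (hrot : List.IsRotated W W') (hW' : W' = A ++ D) (hmax : IsMaxAscentM W A) :
    D = [] ↔ Monotonic W := by
  constructor
  · -- D = [] → W monotonic
    intro hD
    subst hD
    rw [List.append_nil] at hW'
    subst hW'
    have hpos := MagnusAux3.no_neg_of_max hrot hmax
    exact Or.inl fun a ha => hpos a (hrot.perm.mem_iff.mp ha)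
  · -- W monotonic → D = []
    intro hmono
    have hW'len : W'.length = W.length := (hrot.perm.length_eq).symm
    have hW'ne : W' ≠ [] := List.ne_nil_of_length_pos (by omega)
    rcases hmono with hpos | hneg
    · -- all-positive case
      by_contra hD
      have hW'pos : ∀ a ∈ W', a.2 = true := fun a ha =>
        hpos a (hrot.perm.mem_iff.mpr ha)
      have hAsc : IsAscentM W' := by
        refine ⟨hW'ne, ?_, ?_⟩
        · intro i hi0 hile
          apply MagnusAux2.pos_word_lt
          · apply List.ne_nil_of_length_pos
            rw [List.length_take]
            omega
          · intro a ha
            exact hW'pos a (List.take_subset _ _ ha)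
        · intro i hi
          apply MagnusAux2.pos_word_lt
          · apply List.ne_nil_of_length_pos
            rw [List.length_drop]
            omega
          · intro a ha
            exact hW'pos a (List.drop_subset _ _ ha)
      have hIn : InRW W W' := ⟨W', Or.inl hrot, List.infix_refl W'⟩
      have hApos : ∀ a ∈ A, a.2 = true := fun a ha =>
        hW'pos a (by rw [hW']; exact List.mem_append_left _ ha)
      have hDpos : ∀ a ∈ D, a.2 = true := fun a ha =>
        hW'pos a (by rw [hW']; exact List.mem_append_right _ ha)
      have hle : ∀ m, mcoeff A m ≤ mcoeff W' m := by
        intro m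
        rw [hW']
        exact MagnusAux2.mcoeff_le_append hApos hDpos m
      obtain ⟨d, D', rfl⟩ := List.exists_cons_of_ne_nil hD
      have hd2 : d.2 = true := hDpos d (by simp)
      have hd : d = (d.1, true) := by
        rw [← hd2]
      have hmemd : (d.1, true) ∈ d :: D' := by
        rw [← hd]
        simp
      have hstrict : expSum A d.1 < expSum W' d.1 := by
        rw [hW', MagnusAux2.expSum_append]
        have := MagnusAux2.expSum_pos_of_mem hmemd hDpos
        omega
      rcases hmax.2.2 W' hAsc hIn with hlt | heq
      · obtain ⟨m, hm1, _⟩ := hlt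
        have := hle m
        omega
      · have := heq [d.1]
        rw [MagnusAux2.mcoeff_single, MagnusAux2.mcoeff_single] at this
        omega
    · -- all-negative case: contradiction with first letter of the ascent A
      exfalso
      have hAne : A ≠ [] := hmax.1.1
      obtain ⟨a, A', rfl⟩ := List.exists_cons_of_ne_nil hAne
      have haW' : a ∈ W' := by
        rw [hW']
        exact List.mem_append_left _ (by simp)
      have ha2 : a.2 = false := hneg a (hrot.perm.mem_iff.mpr haW')
      have h1 : MagnusLT [] ((a :: A').take 1) := hmax.1.2.1 1 one_pos (by simp)
      have htake : (a :: A').take 1 = [(a.1, false)] := by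
        rw [← ha2]
        simp
      rw [htake] at h1
      exact MagnusAux2.not_lt_neg_letter a.1 h1
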